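/- arXiv:2306.08084 — 4 statements merged into one kernel-verified Lean document; each statement's English description precedes it below -/
import Mathlib

section
/- Assume positivity: 0 < p(X) < 1 μ-a.s. where p∘X is a version of E_μ[1_{S=1} | σ(X)], and define the true selection-model offset a(x) = ln((1 − p(x))/p(x)) − ln c(x). Then for every measurable b* : 𝒳 → ℝ making the displayed integrands μ-integrable: E_μ[ 1_{S=1} · e^{a(X) + η q(Y)} · b*(X) ] = E_μ[ 1_{S=0} · b*(X) ]. -/
open MeasureTheory ProbabilityTheory Real

/-! On the source population `S = 1`, the pull-out property replaces the tilt `e^{η q(Y)}` by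
its conditional mean `c(X)`, which cancels the factor `e^{-ln c(X)}` of the weight; what is left
is the inverse odds `(1 - p(X)) / p(X)` times `b*(X)`. Conditioning on `X` once more over the
whole population, the indicator of `S = 1` contributes `p(X)` and that of `S = 0` contributes
`1 - p(X)`, so the inverse odds turn the first integral into the second. -/

theorem indicator_setOf_eq_true {α M : Type*} [Zero M] (S : α → Bool) (f : α → M) :
    {a | S a = true}.indicator f = fun a => if S a then f a else 0 := by
  ext a; simp [Set.indicator_apply]

theorem indicator_compl_setOf_eq_true {α M : Type*} [Zero M] (S : α → Bool) (f : α → M) :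
    {a | S a = true}ᶜ.indicator f = fun a => if S a then 0 else f a := by
  ext a; cases h : S a <;> simp [h]

section Cond

variable {Ω E : Type*} [MeasurableSpace Ω] {μ : Measure Ω} {s : Set Ω} [NormedAddCommGroup E]

theorem integral_indicator_eq_measureReal_smul_integral_cond [NormedSpace ℝ E]
    (hs : MeasurableSet s) (hs_fin : μ s ≠ ⊤) (f : Ω → E) :
    ∫ ω, s.indicator f ω ∂μ = μ.real s • ∫ ω, f ω ∂μ[|s] := by
  rcases eq_or_ne (μ s) 0 with hs0 | hs0
  · simp [integral_indicator hs, Measure.restrict_eq_zero.2 hs0, measureReal_def, hs0]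
  rw [integral_indicator hs, ProbabilityTheory.cond, integral_smul_measure, smul_smul,
    measureReal_def, ← ENNReal.toReal_mul, ENNReal.mul_inv_cancel hs0 hs_fin,
    ENNReal.toReal_one, one_smul]

theorem integrable_cond_iff_integrable_indicator (hs : MeasurableSet s) (hs0 : μ s ≠ 0)
    (hs_fin : μ s ≠ ⊤) {f : Ω → E} :
    Integrable f μ[|s] ↔ Integrable (s.indicator f) μ := by
  rw [integrable_indicator_iff hs, ProbabilityTheory.cond,
    integrable_smul_measure (ENNReal.inv_ne_zero.2 hs_fin) (ENNReal.inv_ne_top.2 hs0)]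
  rfl

end Cond

section ConditionalExpectation

variable {Ω : Type*} {m m₀ : MeasurableSpace Ω} {μ : Measure Ω} {g f c : Ω → ℝ}

theorem integrable_mul_of_ae_eq_condExp (hg : StronglyMeasurable[m] g)
    (hgf : Integrable (g * f) μ) (hf : Integrable f μ) (hc : c =ᵐ[μ] μ[f|m]) :
    Integrable (g * c) μ :=
  integrable_condExp.congr
    ((condExp_mul_of_stronglyMeasurable_left hg hgf hf).trans (Filter.EventuallyEq.rfl.mul hc.symm))

theorem integral_mul_eq_integral_mul_of_ae_eq_condExp (hm : m ≤ m₀) [SigmaFinite (μ.trim hm)]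
    (hg : StronglyMeasurable[m] g) (hgf : Integrable (g * f) μ) (hf : Integrable f μ)
    (hc : c =ᵐ[μ] μ[f|m]) :
    ∫ ω, g ω * f ω ∂μ = ∫ ω, g ω * c ω ∂μ :=
  (integral_condExp hm).symm.trans <| integral_congr_ae
    ((condExp_mul_of_stronglyMeasurable_left hg hgf hf).trans (Filter.EventuallyEq.rfl.mul hc.symm))

variable [IsFiniteMeasure μ] {s : Set Ω} {ρ : Ω → ℝ}

theorem integral_indicator_eq_integral_mul_of_ae_eq_condExp (hm : m ≤ m₀)
    (hs : MeasurableSet s) (hg : StronglyMeasurable[m] g) (hgs : Integrable (s.indicator g) μ)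
    (hρ : ρ =ᵐ[μ] μ[s.indicator 1|m]) :
    ∫ ω, s.indicator g ω ∂μ = ∫ ω, g ω * ρ ω ∂μ := by
  have hmul : g * s.indicator 1 = s.indicator g := by
    ext ω; by_cases hω : ω ∈ s <;> simp [hω]
  have h1 : Integrable (1 : Ω → ℝ) μ := integrable_const 1
  rw [← integral_mul_eq_integral_mul_of_ae_eq_condExp hm hg (hmul ▸ hgs) (h1.indicator hs) hρ,
    ← hmul]
  rfl

theorem integral_indicator_compl_eq_integral_mul_of_ae_eq_condExp (hm : m ≤ m₀)
    (hs : MeasurableSet s) (hg : StronglyMeasurable[m] g) (hgs : Integrable (sᶜ.indicator g) μ)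
    (hρ : ρ =ᵐ[μ] μ[s.indicator 1|m]) :
    ∫ ω, sᶜ.indicator g ω ∂μ = ∫ ω, g ω * (1 - ρ ω) ∂μ := by
  have h1 : Integrable (1 : Ω → ℝ) μ := integrable_const 1
  refine integral_indicator_eq_integral_mul_of_ae_eq_condExp hm hs.compl hg hgs ?_
  filter_upwards [hρ, condExp_sub h1 (h1.indicator hs) m] with ω hρω hsub
  rw [Set.indicator_compl, hsub, Pi.sub_apply, hρω, show μ[(1 : Ω → ℝ)|m] = 1 from
    condExp_const hm 1, Pi.one_apply]

theorem integral_indicator_odds_mul_eq_integral_indicator_compl (hm : m ≤ m₀)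
    (hs : MeasurableSet s) (hρm : StronglyMeasurable[m] ρ) (hρ : ρ =ᵐ[μ] μ[s.indicator 1|m])
    (hρpos : ∀ᵐ ω ∂μ, 0 < ρ ω) (hg : StronglyMeasurable[m] g)
    (hgs : Integrable (s.indicator fun ω => (1 - ρ ω) / ρ ω * g ω) μ)
    (hgsc : Integrable (sᶜ.indicator g) μ) :
    ∫ ω, s.indicator (fun ω => (1 - ρ ω) / ρ ω * g ω) ω ∂μ = ∫ ω, sᶜ.indicator g ω ∂μ := by
  have hwg : StronglyMeasurable[m] fun ω => (1 - ρ ω) / ρ ω * g ω := by fun_prop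
  rw [integral_indicator_eq_integral_mul_of_ae_eq_condExp hm hs hwg hgs hρ,
    integral_indicator_compl_eq_integral_mul_of_ae_eq_condExp hm hs hg hgsc hρ]
  refine integral_congr_ae ?_
  filter_upwards [hρpos] with ω hω
  field_simp

end ConditionalExpectation

theorem selection_model_weights_transport_covariate_functions_general
    {Ω : Type*} [MeasurableSpace Ω] {𝒳 : Type*} [MeasurableSpace 𝒳]
    (μ : Measure Ω) [IsProbabilityMeasure μ]
    (X : Ω → 𝒳) (Y : Ω → ℝ) (S : Ω → Bool)
    (hX : Measurable X) (hS : Measurable S)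
    (hS1 : 0 < μ {ω | S ω = true})
    (η : ℝ) (q : ℝ → ℝ)
    (c : 𝒳 → ℝ) (hc : Measurable c)
    (hexp_int : Integrable (fun ω => Real.exp (η * q (Y ω))) (μ[|{ω | S ω = true}]))
    (hcver : (fun ω => c (X ω)) =ᵐ[μ[|{ω | S ω = true}]]
      (μ[|{ω | S ω = true}])[fun ω => Real.exp (η * q (Y ω)) |
        MeasurableSpace.comap X inferInstance])
    (hcpos : ∀ᵐ ω ∂(μ[|{ω | S ω = true}]), 0 < c (X ω))
    -- the true propensity, with positivity 0 < p(X) < 1 μ-a.s.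
    (p : 𝒳 → ℝ) (hp : Measurable p)
    (hpver : (fun ω => p (X ω)) =ᵐ[μ]
      μ[fun ω => if S ω then (1 : ℝ) else 0 | MeasurableSpace.comap X inferInstance])
    (hppos : ∀ᵐ ω ∂μ, 0 < p (X ω) ∧ p (X ω) < 1)
    -- the true selection-model offset
    (a : 𝒳 → ℝ)
    (ha : ∀ x, a x = Real.log ((1 - p x) / p x) - Real.log (c x))
    -- an arbitrary measurable covariate function b*
    (bstar : 𝒳 → ℝ) (hbstar : Measurable bstar)
    (hwt_int : Integrable (fun ω =>
      if S ω then Real.exp (a (X ω) + η * q (Y ω)) * bstar (X ω) else 0) μ)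
    (hbstar_int : Integrable (fun ω => if S ω then 0 else bstar (X ω)) μ) :
    ∫ ω, (if S ω then Real.exp (a (X ω) + η * q (Y ω)) * bstar (X ω) else 0) ∂μ
      = ∫ ω, (if S ω then 0 else bstar (X ω)) ∂μ := by
  have hm : MeasurableSpace.comap X inferInstance ≤ ‹MeasurableSpace Ω› := hX.comap_le
  have hmX {φ : 𝒳 → ℝ} (hφ : Measurable φ) :
      StronglyMeasurable[MeasurableSpace.comap X inferInstance] fun ω => φ (X ω) :=
    (hφ.comp (comap_measurable X)).stronglyMeasurable
  set A := {ω | S ω = true}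
  have hA : MeasurableSet A := hS (measurableSet_singleton true)
  have hAμ : μ A ≠ 0 ∧ μ A ≠ ⊤ := ⟨hS1.ne', measure_ne_top μ A⟩
  have ha_meas : Measurable a := by rw [funext ha]; fun_prop
  set g : Ω → ℝ := fun ω => exp (a (X ω)) * bstar (X ω)
  have hg : StronglyMeasurable[MeasurableSpace.comap X inferInstance] g :=
    hmX (φ := fun x => exp (a x) * bstar x) (by fun_prop)
  have hweight : (fun ω => if S ω then exp (a (X ω) + η * q (Y ω)) * bstar (X ω) else 0)
      = A.indicator (g * fun ω => exp (η * q (Y ω))) := by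
    rw [indicator_setOf_eq_true]; ext ω; simp only [g, Pi.mul_apply, exp_add]
    split_ifs <;> ring
  have hgf : Integrable (g * fun ω => exp (η * q (Y ω))) μ[|A] :=
    (integrable_cond_iff_integrable_indicator hA hAμ.1 hAμ.2).2 (hweight ▸ hwt_int)
  have hgc : ∀ᵐ ω ∂μ[|A], g ω * c (X ω) = (1 - p (X ω)) / p (X ω) * bstar (X ω) := by
    filter_upwards [hcpos, cond_absolutelyContinuous.ae_le hppos] with ω hc hp
    simp only [g, ha]
    rw [exp_sub, exp_log (div_pos (by linarith [hp.2]) hp.1), exp_log hc]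
    field_simp
  have hpA : (fun ω => p (X ω)) =ᵐ[μ] μ[A.indicator 1 | MeasurableSpace.comap X inferInstance] := by
    rw [indicator_setOf_eq_true]; exact hpver
  rw [hweight, ← indicator_compl_setOf_eq_true]
  rw [← indicator_compl_setOf_eq_true] at hbstar_int
  calc ∫ ω, A.indicator (g * fun ω => exp (η * q (Y ω))) ω ∂μ
      = μ.real A • ∫ ω, g ω * c (X ω) ∂μ[|A] := by
        rw [integral_indicator_eq_measureReal_smul_integral_cond hA hAμ.2,
          ← integral_mul_eq_integral_mul_of_ae_eq_condExp hm hg hgf hexp_int hcver]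
        rfl
    _ = ∫ ω, A.indicator (fun ω => (1 - p (X ω)) / p (X ω) * bstar (X ω)) ω ∂μ := by
        rw [integral_congr_ae hgc, integral_indicator_eq_measureReal_smul_integral_cond hA hAμ.2]
    _ = ∫ ω, Aᶜ.indicator (fun ω => bstar (X ω)) ω ∂μ := by
        refine integral_indicator_odds_mul_eq_integral_indicator_compl hm hA (hmX hp) hpA
          (hppos.mono fun _ hp => hp.1) (hmX hbstar) ?_ hbstar_int
        rw [← integrable_cond_iff_integrable_indicator hA hAμ.1 hAμ.2]
        exact (integrable_mul_of_ae_eq_condExp hg hgf hexp_int hcver).congr hgc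

/-- Case 2 of the double-robustness Theorem 3 (selection-model parameterization), second
part: the true selection-model weights `e^{a(X) + η q(Y)}`, with offset
`a(x) = ln((1 − p(x))/p(x)) − ln c(x)`, transport any covariate function `b*` from the
source population to the target population:
`E_μ[1_{S=1} e^{a(X) + η q(Y)} b*(X)] = E_μ[1_{S=0} b*(X)]`. -/
theorem selection_model_weights_transport_covariate_functions
    {Ω : Type*} [MeasurableSpace Ω] {𝒳 : Type*} [MeasurableSpace 𝒳]
    (μ : Measure Ω) [IsProbabilityMeasure μ]
    (X : Ω → 𝒳) (Y : Ω → ℝ) (S : Ω → Bool)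
    (hX : Measurable X) (hY : Measurable Y) (hS : Measurable S)
    (hS1 : 0 < μ {ω | S ω = true}) (hS0 : 0 < μ {ω | S ω = false})
    (η : ℝ) (q : ℝ → ℝ) (hq : Measurable q)
    (c : 𝒳 → ℝ) (hc : Measurable c)
    (hexp_int : Integrable (fun ω => Real.exp (η * q (Y ω))) (μ[|{ω | S ω = true}]))
    (hcver : (fun ω => c (X ω)) =ᵐ[μ[|{ω | S ω = true}]]
      (μ[|{ω | S ω = true}])[fun ω => Real.exp (η * q (Y ω)) |
        MeasurableSpace.comap X inferInstance])
    (hcpos : ∀ᵐ ω ∂(μ[|{ω | S ω = true}]), 0 < c (X ω))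
    -- the true propensity, with positivity 0 < p(X) < 1 μ-a.s.
    (p : 𝒳 → ℝ) (hp : Measurable p)
    (hpver : (fun ω => p (X ω)) =ᵐ[μ]
      μ[fun ω => if S ω then (1 : ℝ) else 0 | MeasurableSpace.comap X inferInstance])
    (hppos : ∀ᵐ ω ∂μ, 0 < p (X ω) ∧ p (X ω) < 1)
    -- the true selection-model offset
    (a : 𝒳 → ℝ)
    (ha : ∀ x, a x = Real.log ((1 - p x) / p x) - Real.log (c x))
    -- an arbitrary measurable covariate function b*
    (bstar : 𝒳 → ℝ) (hbstar : Measurable bstar)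
    (hwt_int : Integrable (fun ω =>
      if S ω then Real.exp (a (X ω) + η * q (Y ω)) * bstar (X ω) else 0) μ)
    (hbstar_int : Integrable (fun ω => if S ω then 0 else bstar (X ω)) μ) :
    ∫ ω, (if S ω then Real.exp (a (X ω) + η * q (Y ω)) * bstar (X ω) else 0) ∂μ
      = ∫ ω, (if S ω then 0 else bstar (X ω)) ∂μ :=
  selection_model_weights_transport_covariate_functions_general μ X Y S hX hS hS1 η q c hc hexp_int
    hcver hcpos p hp hpver hppos a ha bstar hbstar hwt_int hbstar_int
end

section
/- Assume positivity: p(X) > 0 μ-a.s. where p∘X is a version of E_μ[1_{S=1} | σ(X)]. Then the population augmented functional for the non-nested design evaluated at the true nuisance functions equals the identified risk: (1/μ(S=0)) · E_μ[ 1_{S=0} · b(X) + 1_{S=1} · ((1 − p(X)) e^{η q(Y)} / (p(X) · c(X))) · (W − b(X)) ] = E_{μ₀}[ b(X) ]. In particular, if in addition the exponential tilt hypothesis holds (b∘X is a version of E_{μ₀}[W | σ(X)]), this common value equals the target-population risk φ(η) = E_{μ₀}[W]; equivalently, the non-parametric influence function Φ¹(η) evaluated at the true nuisances has μ-mean zero.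 -/
/-!
On `{S = 1}` the integrand is a `σ(X)`-measurable weight times the tilted residual
`(W - b(X)) e^{η q(Y)}`, whose `μ₁`-conditional expectation given `X` is
`r(X) - b(X) c(X) = 0`; so that part integrates to zero whatever the weight, and on `{S = 0}`
the integrand is `b(X)`. The one analytic point is the integrability of `b(X) e^{η q(Y)}`:
for nonnegative integrands the tower property gives
`∫ |b(X)| e^{η q(Y)} dμ₁ = ∫ |b(X)| c(X) dμ₁ = ∫ |r(X)| dμ₁ < ∞`.
Under the tilt hypothesis, `E_{μ₀}[b(X)] = E_{μ₀}[W]` is the tower property once more.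
-/

open MeasureTheory ProbabilityTheory Real
open scoped ENNReal

namespace MeasureTheory

variable {Ω : Type*} {m m0 : MeasurableSpace Ω} {ν : Measure[m0] Ω} {e : Ω → ℝ}

theorem trim_withDensity_ofReal_condExp (hm : m ≤ m0) [SigmaFinite (ν.trim hm)]
    (he : 0 ≤ᵐ[ν] e) (he_int : Integrable e ν) :
    (ν.withDensity fun ω => ENNReal.ofReal (ν[e | m] ω)).trim hm
      = (ν.withDensity fun ω => ENNReal.ofReal (e ω)).trim hm := by
  refine @Measure.ext _ m _ _ fun s hs => ?_
  rw [trim_measurableSet_eq hm hs, trim_measurableSet_eq hm hs, withDensity_apply _ (hm s hs),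
    withDensity_apply _ (hm s hs),
    ← ofReal_integral_eq_lintegral_ofReal integrable_condExp.integrableOn
      (ae_restrict_of_ae (condExp_nonneg he)),
    ← ofReal_integral_eq_lintegral_ofReal he_int.integrableOn (ae_restrict_of_ae he),
    setIntegral_condExp hm he_int hs]

theorem lintegral_ofReal_condExp_mul (hm : m ≤ m0) [SigmaFinite (ν.trim hm)]
    (he : 0 ≤ᵐ[ν] e) (he_int : Integrable e ν) {f : Ω → ℝ≥0∞} (hf : Measurable[m] f) :
    ∫⁻ ω, ENNReal.ofReal (ν[e | m] ω) * f ω ∂ν = ∫⁻ ω, ENNReal.ofReal (e ω) * f ω ∂ν := by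
  have hf0 : Measurable f := hf.mono hm le_rfl
  simp only [← Pi.mul_apply (f := fun ω => ENNReal.ofReal _) (g := f)]
  rw [← lintegral_withDensity_eq_lintegral_mul₀ integrable_condExp.aemeasurable.ennreal_ofReal
      hf0.aemeasurable,
    ← lintegral_withDensity_eq_lintegral_mul₀ he_int.aemeasurable.ennreal_ofReal
      hf0.aemeasurable,
    ← lintegral_trim hm hf, ← lintegral_trim hm hf, trim_withDensity_ofReal_condExp hm he he_int]

theorem Integrable.mul_of_mul_condExp (hm : m ≤ m0) [SigmaFinite (ν.trim hm)]
    (he : 0 ≤ᵐ[ν] e) (he_int : Integrable e ν) {g : Ω → ℝ} (hg : StronglyMeasurable[m] g)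
    (hge : Integrable (fun ω => g ω * ν[e | m] ω) ν) :
    Integrable (fun ω => g ω * e ω) ν := by
  refine ⟨(hg.mono hm).aestronglyMeasurable.mul he_int.1, ?_⟩
  have hnorm : ∀ {k : Ω → ℝ}, 0 ≤ᵐ[ν] k →
      ∀ᵐ ω ∂ν, ‖g ω * k ω‖ₑ = ENNReal.ofReal (k ω) * ‖g ω‖ₑ := fun hk => by
    filter_upwards [hk] with ω hω
    rw [enorm_mul, Real.enorm_eq_ofReal hω, mul_comm]
  rw [HasFiniteIntegral, lintegral_congr_ae (hnorm he),
    ← lintegral_ofReal_condExp_mul hm he he_int hg.enorm,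
    ← lintegral_congr_ae (hnorm (condExp_nonneg he))]
  exact hge.2

theorem integral_mul_eq_zero_of_condExp_eq_zero (hm : m ≤ m0) [SigmaFinite (ν.trim hm)]
    {w f : Ω → ℝ} (hw : StronglyMeasurable[m] w) (hf : Integrable f ν)
    (hwf : Integrable (w * f) ν) (hf_cond : ν[f | m] =ᵐ[ν] 0) :
    ∫ ω, w ω * f ω ∂ν = 0 := by
  have hwf_cond : ν[w * f | m] =ᵐ[ν] 0 := by
    filter_upwards [condExp_mul_of_stronglyMeasurable_left hw hwf hf, hf_cond] with ω h1 h2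
    simp [h1, h2]
  change ∫ ω, (w * f) ω ∂ν = 0
  rw [← integral_condExp hm, integral_congr_ae hwf_cond, Pi.zero_def, integral_zero]

variable {W c r : Ω → ℝ}

theorem integrable_div_mul_of_condExp (hm : m ≤ m0) [SigmaFinite (ν.trim hm)]
    (he : 0 ≤ᵐ[ν] e) (he_int : Integrable e ν)
    (hc : StronglyMeasurable[m] c) (hr : StronglyMeasurable[m] r)
    (hc_eq : c =ᵐ[ν] ν[e | m]) (hc_pos : ∀ᵐ ω ∂ν, 0 < c ω) (hr_int : Integrable r ν) :
    Integrable ((r / c) * e) ν := by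
  refine Integrable.mul_of_mul_condExp hm he he_int (hr.div hc) (hr_int.congr ?_)
  filter_upwards [hc_eq, hc_pos] with ω h1 h2
  rw [← h1, Pi.div_apply, div_mul_cancel₀ _ h2.ne']

theorem condExp_sub_div_mul_eq_zero (hm : m ≤ m0) [SigmaFinite (ν.trim hm)]
    (he : 0 ≤ᵐ[ν] e) (he_int : Integrable e ν) (hWe_int : Integrable (W * e) ν)
    (hc : StronglyMeasurable[m] c) (hr : StronglyMeasurable[m] r)
    (hc_eq : c =ᵐ[ν] ν[e | m]) (hc_pos : ∀ᵐ ω ∂ν, 0 < c ω) (hr_eq : r =ᵐ[ν] ν[W * e | m]) :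
    ν[(W - r / c) * e | m] =ᵐ[ν] 0 := by
  have hbe_int : Integrable ((r / c) * e) ν := integrable_div_mul_of_condExp hm he he_int hc hr
    hc_eq hc_pos (integrable_condExp.congr hr_eq.symm)
  have hbe_cond : ν[(r / c) * e | m] =ᵐ[ν] r := by
    filter_upwards [condExp_mul_of_stronglyMeasurable_left (hr.div hc) hbe_int he_int,
      hc_eq, hc_pos] with ω h1 h2 h3
    rw [h1, Pi.mul_apply, Pi.div_apply, ← h2, div_mul_cancel₀ _ h3.ne']
  rw [sub_mul]
  filter_upwards [condExp_sub hWe_int hbe_int m, hr_eq, hbe_cond] with ω h1 h2 h3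
  simp [h1, ← h2, h3]

theorem integral_mul_sub_div_mul_eq_zero (hm : m ≤ m0) [SigmaFinite (ν.trim hm)]
    (he : 0 ≤ᵐ[ν] e) (he_int : Integrable e ν) (hWe_int : Integrable (W * e) ν)
    (hc : StronglyMeasurable[m] c) (hr : StronglyMeasurable[m] r)
    (hc_eq : c =ᵐ[ν] ν[e | m]) (hc_pos : ∀ᵐ ω ∂ν, 0 < c ω) (hr_eq : r =ᵐ[ν] ν[W * e | m])
    {w : Ω → ℝ} (hw : StronglyMeasurable[m] w) (hw_int : Integrable (w * ((W - r / c) * e)) ν) :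
    ∫ ω, w ω * ((W - r / c) * e) ω ∂ν = 0 := by
  have hbe_int : Integrable ((r / c) * e) ν := integrable_div_mul_of_condExp hm he he_int hc hr
    hc_eq hc_pos (integrable_condExp.congr hr_eq.symm)
  refine integral_mul_eq_zero_of_condExp_eq_zero hm hw ?_ hw_int
    (condExp_sub_div_mul_eq_zero hm he he_int hWe_int hc hr hc_eq hc_pos hr_eq)
  rw [sub_mul]
  exact hWe_int.sub hbe_int

theorem Integrable.cond {f : Ω → ℝ} {μ : Measure[m0] Ω} (hf : Integrable f μ) {s : Set Ω}
    (hμs : μ s ≠ 0) : Integrable f μ[|s] :=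
  hf.restrict.smul_measure (ENNReal.inv_ne_top.mpr hμs)

end MeasureTheory

namespace ProbabilityTheory

theorem integral_cond_eq_inv_mul_setIntegral {Ω : Type*} [MeasurableSpace Ω] (μ : Measure Ω)
    (s : Set Ω) (f : Ω → ℝ) : ∫ ω, f ω ∂μ[|s] = (μ s).toReal⁻¹ * ∫ ω in s, f ω ∂μ := by
  rw [cond, integral_smul_measure, ENNReal.toReal_inv, smul_eq_mul]

theorem integral_eq_setIntegral_compl_of_integral_cond_eq_zero {Ω : Type*} [MeasurableSpace Ω]
    {μ : Measure Ω} [IsFiniteMeasure μ] {s : Set Ω} (hs : MeasurableSet s) (hμs : μ s ≠ 0)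
    {f : Ω → ℝ} (hf : Integrable f μ) (hf_cond : ∫ ω, f ω ∂μ[|s] = 0) :
    ∫ ω, f ω ∂μ = ∫ ω in sᶜ, f ω ∂μ := by
  rw [integral_cond_eq_inv_mul_setIntegral] at hf_cond
  have hf_s : ∫ ω in s, f ω ∂μ = 0 := (mul_eq_zero.mp hf_cond).resolve_left
    (inv_ne_zero (ENNReal.toReal_ne_zero.mpr ⟨hμs, measure_ne_top μ s⟩))
  rw [← integral_add_compl hs hf, hf_s, zero_add]

end ProbabilityTheory

theorem augmented_functional_nonnested_at_truth_general
    {Ω : Type*} [MeasurableSpace Ω] {𝒳 : Type*} [MeasurableSpace 𝒳]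
    (μ : Measure Ω) [IsProbabilityMeasure μ]
    (X : Ω → 𝒳) (Y : Ω → ℝ) (S : Ω → Bool)
    (hX : Measurable X) (hS : Measurable S)
    (hS1 : 0 < μ {ω | S ω = true})
    (η : ℝ) (q : ℝ → ℝ)
    (ℓ : 𝒳 → ℝ → ℝ)
    (c r : 𝒳 → ℝ) (hc : Measurable c) (hr : Measurable r)
    (hexp_int : Integrable (fun ω => Real.exp (η * q (Y ω))) (μ[|{ω | S ω = true}]))
    (hWexp_int : Integrable (fun ω => ℓ (X ω) (Y ω) * Real.exp (η * q (Y ω)))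
      (μ[|{ω | S ω = true}]))
    (hcver : (fun ω => c (X ω)) =ᵐ[μ[|{ω | S ω = true}]]
      (μ[|{ω | S ω = true}])[fun ω => Real.exp (η * q (Y ω)) |
        MeasurableSpace.comap X inferInstance])
    (hcpos : ∀ᵐ ω ∂(μ[|{ω | S ω = true}]), 0 < c (X ω))
    (hrver : (fun ω => r (X ω)) =ᵐ[μ[|{ω | S ω = true}]]
      (μ[|{ω | S ω = true}])[fun ω => ℓ (X ω) (Y ω) * Real.exp (η * q (Y ω)) |
        MeasurableSpace.comap X inferInstance])
    -- the true propensity, with positivity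
    (p : 𝒳 → ℝ) (hp : Measurable p)
    (hintegrand : Integrable (fun ω =>
      if S ω then ((1 - p (X ω)) * Real.exp (η * q (Y ω)) / (p (X ω) * c (X ω)))
        * (ℓ (X ω) (Y ω) - r (X ω) / c (X ω))
      else r (X ω) / c (X ω)) μ) :
    ((μ {ω | S ω = false}).toReal⁻¹
        * ∫ ω, (if S ω then
              ((1 - p (X ω)) * Real.exp (η * q (Y ω)) / (p (X ω) * c (X ω)))
                * (ℓ (X ω) (Y ω) - r (X ω) / c (X ω))
            else r (X ω) / c (X ω)) ∂μ
      = ∫ ω, r (X ω) / c (X ω) ∂(μ[|{ω | S ω = false}])) ∧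
    -- under the exponential tilt hypothesis the common value is φ(η) = E_{μ₀}[W]
    (((fun ω => r (X ω) / c (X ω)) =ᵐ[μ[|{ω | S ω = false}]]
        (μ[|{ω | S ω = false}])[fun ω => ℓ (X ω) (Y ω) |
          MeasurableSpace.comap X inferInstance]) →
      (μ {ω | S ω = false}).toReal⁻¹
          * ∫ ω, (if S ω then
                ((1 - p (X ω)) * Real.exp (η * q (Y ω)) / (p (X ω) * c (X ω)))
                  * (ℓ (X ω) (Y ω) - r (X ω) / c (X ω))
              else r (X ω) / c (X ω)) ∂μ
        = ∫ ω, ℓ (X ω) (Y ω) ∂(μ[|{ω | S ω = false}])) := by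
  set F : Ω → ℝ := fun ω => if S ω then
    ((1 - p (X ω)) * Real.exp (η * q (Y ω)) / (p (X ω) * c (X ω)))
      * (ℓ (X ω) (Y ω) - r (X ω) / c (X ω)) else r (X ω) / c (X ω) with hF
  set s := {ω | S ω = true}
  have hs : MeasurableSet s := hS (measurableSet_singleton true)
  have hsc : sᶜ = {ω | S ω = false} := by ext ω; simp [s]
  have hcomp {ψ : 𝒳 → ℝ} (hψ : Measurable ψ) :
      StronglyMeasurable[MeasurableSpace.comap X inferInstance] (ψ ∘ X) :=
    (hψ.comp (comap_measurable X)).stronglyMeasurable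
  have hF_s : F =ᵐ[μ[|s]] fun ω => (1 - p (X ω)) / (p (X ω) * c (X ω)) *
      ((ℓ (X ω) (Y ω) - r (X ω) / c (X ω)) * Real.exp (η * q (Y ω))) := by
    filter_upwards [ae_cond_mem hs] with ω hω
    simp only [hF, show S ω = true from hω, if_true]
    ring
  have hF_cond_s : ∫ ω, F ω ∂μ[|s] = 0 := by
    rw [integral_congr_ae hF_s]
    exact integral_mul_sub_div_mul_eq_zero hX.comap_le
      (ae_of_all _ fun ω => (Real.exp_pos _).le) hexp_int hWexp_int (hcomp hc) (hcomp hr)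
      hcver hcpos hrver
      (hcomp (ψ := fun x => (1 - p x) / (p x * c x)) ((measurable_const.sub hp).div (hp.mul hc)))
      ((hintegrand.cond hS1.ne').congr hF_s)
  have hmain : (μ {ω | S ω = false}).toReal⁻¹ * ∫ ω, F ω ∂μ
      = ∫ ω, r (X ω) / c (X ω) ∂μ[|{ω | S ω = false}] := by
    rw [integral_eq_setIntegral_compl_of_integral_cond_eq_zero hs hS1.ne' hintegrand hF_cond_s,
      hsc, ← integral_cond_eq_inv_mul_setIntegral]
    refine integral_congr_ae ?_
    filter_upwards [ae_cond_mem (hsc ▸ hs.compl)] with ω hω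
    simp [hF, show S ω = false from hω]
  refine ⟨hmain, fun htilt => ?_⟩
  rw [hmain, integral_congr_ae htilt, integral_condExp hX.comap_le]

/-- The population augmented functional for the non-nested design, evaluated at the true
nuisance functions `p`, `c`, `b = r/c`, equals the identified risk `E_{μ₀}[b(X)]`; and if
in addition the exponential tilt hypothesis holds (`b∘X` is a version of
`E_{μ₀}[W | σ(X)]`), this common value equals the target-population risk
`φ(η) = E_{μ₀}[W]` — equivalently, the influence function `Φ¹(η)` at the true nuisances
has μ-mean zero. -/
theorem augmented_functional_nonnested_at_truth
    {Ω : Type*} [MeasurableSpace Ω] {𝒳 : Type*} [MeasurableSpace 𝒳]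
    (μ : Measure Ω) [IsProbabilityMeasure μ]
    (X : Ω → 𝒳) (Y : Ω → ℝ) (S : Ω → Bool)
    (hX : Measurable X) (hY : Measurable Y) (hS : Measurable S)
    (hS1 : 0 < μ {ω | S ω = true}) (hS0 : 0 < μ {ω | S ω = false})
    (η : ℝ) (q : ℝ → ℝ) (hq : Measurable q)
    (ℓ : 𝒳 → ℝ → ℝ) (hℓ : Measurable (Function.uncurry ℓ))
    (c r : 𝒳 → ℝ) (hc : Measurable c) (hr : Measurable r)
    (hexp_int : Integrable (fun ω => Real.exp (η * q (Y ω))) (μ[|{ω | S ω = true}]))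
    (hWexp_int : Integrable (fun ω => ℓ (X ω) (Y ω) * Real.exp (η * q (Y ω)))
      (μ[|{ω | S ω = true}]))
    (hcver : (fun ω => c (X ω)) =ᵐ[μ[|{ω | S ω = true}]]
      (μ[|{ω | S ω = true}])[fun ω => Real.exp (η * q (Y ω)) |
        MeasurableSpace.comap X inferInstance])
    (hcpos : ∀ᵐ ω ∂(μ[|{ω | S ω = true}]), 0 < c (X ω))
    (hrver : (fun ω => r (X ω)) =ᵐ[μ[|{ω | S ω = true}]]
      (μ[|{ω | S ω = true}])[fun ω => ℓ (X ω) (Y ω) * Real.exp (η * q (Y ω)) |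
        MeasurableSpace.comap X inferInstance])
    -- the true propensity, with positivity
    (p : 𝒳 → ℝ) (hp : Measurable p)
    (hpver : (fun ω => p (X ω)) =ᵐ[μ]
      μ[fun ω => if S ω then (1 : ℝ) else 0 | MeasurableSpace.comap X inferInstance])
    (hppos : ∀ᵐ ω ∂μ, 0 < p (X ω))
    (hW_int₀ : Integrable (fun ω => ℓ (X ω) (Y ω)) (μ[|{ω | S ω = false}]))
    (hb_int₀ : Integrable (fun ω => r (X ω) / c (X ω)) (μ[|{ω | S ω = false}]))
    (hintegrand : Integrable (fun ω =>
      if S ω then ((1 - p (X ω)) * Real.exp (η * q (Y ω)) / (p (X ω) * c (X ω)))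
        * (ℓ (X ω) (Y ω) - r (X ω) / c (X ω))
      else r (X ω) / c (X ω)) μ) :
    ((μ {ω | S ω = false}).toReal⁻¹
        * ∫ ω, (if S ω then
              ((1 - p (X ω)) * Real.exp (η * q (Y ω)) / (p (X ω) * c (X ω)))
                * (ℓ (X ω) (Y ω) - r (X ω) / c (X ω))
            else r (X ω) / c (X ω)) ∂μ
      = ∫ ω, r (X ω) / c (X ω) ∂(μ[|{ω | S ω = false}])) ∧
    -- under the exponential tilt hypothesis the common value is φ(η) = E_{μ₀}[W]
    (((fun ω => r (X ω) / c (X ω)) =ᵐ[μ[|{ω | S ω = false}]]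
        (μ[|{ω | S ω = false}])[fun ω => ℓ (X ω) (Y ω) |
          MeasurableSpace.comap X inferInstance]) →
      (μ {ω | S ω = false}).toReal⁻¹
          * ∫ ω, (if S ω then
                ((1 - p (X ω)) * Real.exp (η * q (Y ω)) / (p (X ω) * c (X ω)))
                  * (ℓ (X ω) (Y ω) - r (X ω) / c (X ω))
              else r (X ω) / c (X ω)) ∂μ
        = ∫ ω, ℓ (X ω) (Y ω) ∂(μ[|{ω | S ω = false}])) :=
  augmented_functional_nonnested_at_truth_general μ X Y S hX hS hS1 η q ℓ c r hc hr hexp_int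
    hWexp_int hcver hcpos hrver p hp hintegrand
end

section
/- Assume positivity: p(X) > 0 μ-a.s. where p∘X is a version of E_μ[1_{S=1} | σ(X)]. Then the population augmented functional for the nested design evaluated at the true nuisance functions equals the identified nested risk: E_μ[ 1_{S=1} · W + 1_{S=0} · b(X) + 1_{S=1} · ((1 − p(X)) e^{η q(Y)} / (p(X) · c(X))) · (W − b(X)) ] = E_μ[1_{S=1} W] + E_μ[1_{S=0} b(X)]. In particular, if in addition the exponential tilt hypothesis holds (b∘X is a version of E_{μ₀}[W | σ(X)]), this common value equals ψ(η) = E_μ[W]. -/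
/-!
On `{S = 1}` the augmentation term is `g(X) · e^{η q(Y)} (W - b(X))` with `g = (1 - p) / (p c)`,
and `b(X) c(X) = r(X)` says exactly that `e^{η q(Y)} (W - b(X))` has conditional mean zero given
`X` under `μ₁`; pulling out the `σ(X)`-measurable factor `g(X)` shows that the augmentation
integrates to zero. The integrability of `b(X) e^{η q(Y)}` needed for this comes from that of
`r(X)`: for `σ(X)`-measurable `φ ≥ 0`, `E[φ e] = E[φ E[e | X]]`, since the densities `e` and
`E[e | X]` define the same measure on `σ(X)`.

Under the tilt hypothesis, `∫_{S=0} b(X) = μ(S=0) E_{μ₀}[b(X)] = μ(S=0) E_{μ₀}[W] = ∫_{S=0} W`.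
-/

open MeasureTheory ProbabilityTheory Real

open scoped ENNReal

section CondExp

variable {Ω : Type*} {m m₀ : MeasurableSpace Ω} {ν : Measure Ω}

theorem lintegral_mul_ofReal_condExp (hm : m ≤ m₀) [SigmaFinite (ν.trim hm)]
    {φ : Ω → ℝ≥0∞} (hφ : Measurable[m] φ) {h : Ω → ℝ} (hh0 : 0 ≤ᵐ[ν] h)
    (hh : Integrable h ν) :
    ∫⁻ ω, φ ω * ENNReal.ofReal (ν[h|m] ω) ∂ν = ∫⁻ ω, φ ω * ENNReal.ofReal (h ω) ∂ν := by
  have hk0 : 0 ≤ᵐ[ν] ν[h|m] := condExp_nonneg hh0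
  have htrim : (ν.withDensity fun ω => ENNReal.ofReal (ν[h|m] ω)).trim hm
      = (ν.withDensity fun ω => ENNReal.ofReal (h ω)).trim hm := by
    refine @Measure.ext _ m _ _ fun t ht => ?_
    rw [trim_measurableSet_eq hm ht, trim_measurableSet_eq hm ht,
      withDensity_apply _ (hm t ht), withDensity_apply _ (hm t ht),
      ← ofReal_integral_eq_lintegral_ofReal integrable_condExp.integrableOn
        (ae_restrict_of_ae hk0),
      ← ofReal_integral_eq_lintegral_ofReal hh.integrableOn (ae_restrict_of_ae hh0),
      setIntegral_condExp hm hh ht]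
  have hφ₀ : Measurable φ := hφ.mono hm le_rfl
  calc ∫⁻ ω, φ ω * ENNReal.ofReal (ν[h|m] ω) ∂ν
      = ∫⁻ ω, φ ω ∂(ν.withDensity fun ω => ENNReal.ofReal (ν[h|m] ω)).trim hm := by
        rw [lintegral_trim hm hφ, lintegral_withDensity_eq_lintegral_mul₀
          (stronglyMeasurable_condExp.mono hm).aemeasurable.ennreal_ofReal hφ₀.aemeasurable]
        simp only [Pi.mul_apply, mul_comm]
    _ = ∫⁻ ω, φ ω * ENNReal.ofReal (h ω) ∂ν := by
        rw [htrim, lintegral_trim hm hφ, lintegral_withDensity_eq_lintegral_mul₀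
          hh.1.aemeasurable.ennreal_ofReal hφ₀.aemeasurable]
        simp only [Pi.mul_apply, mul_comm]

theorem integrable_mul_of_integrable_mul_condExp (hm : m ≤ m₀) [SigmaFinite (ν.trim hm)]
    {φ h : Ω → ℝ} (hφ : StronglyMeasurable[m] φ) (hh0 : 0 ≤ᵐ[ν] h) (hh : Integrable h ν)
    (hφh : Integrable (φ * ν[h|m]) ν) : Integrable (φ * h) ν := by
  refine ⟨(hφ.mono hm).aestronglyMeasurable.mul hh.1, ?_⟩
  have hk0 : 0 ≤ᵐ[ν] ν[h|m] := condExp_nonneg hh0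
  rw [hasFiniteIntegral_iff_enorm]
  calc ∫⁻ ω, ‖(φ * h) ω‖ₑ ∂ν
      = ∫⁻ ω, ‖φ ω‖ₑ * ENNReal.ofReal (h ω) ∂ν := by
        refine lintegral_congr_ae ?_
        filter_upwards [hh0] with ω hω
        rw [Pi.mul_apply, enorm_mul, Real.enorm_of_nonneg hω]
    _ = ∫⁻ ω, ‖(φ * ν[h|m]) ω‖ₑ ∂ν := by
        rw [← lintegral_mul_ofReal_condExp hm (φ := fun ω => ‖φ ω‖ₑ)
          (measurable_enorm.comp hφ.measurable) hh0 hh]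
        refine lintegral_congr_ae ?_
        filter_upwards [hk0] with ω hω
        rw [Pi.mul_apply, enorm_mul, Real.enorm_of_nonneg hω]
    _ < ∞ := hφh.2

theorem condExp_sub_mul_ae_eq_zero {f e b : Ω → ℝ} (hb : StronglyMeasurable[m] b)
    (hf : Integrable f ν) (he : Integrable e ν) (hbe : Integrable (b * e) ν)
    (hfb : ν[f|m] =ᵐ[ν] b * ν[e|m]) : ν[f - b * e|m] =ᵐ[ν] 0 := by
  filter_upwards [condExp_sub hf hbe m, condExp_mul_of_stronglyMeasurable_left hb hbe he, hfb]
    with ω hsub hpull hω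
  simp only [hsub, Pi.sub_apply, hpull, hω, sub_self, Pi.zero_apply]

theorem integral_mul_eq_zero_of_condExp_ae_eq_zero (hm : m ≤ m₀) [SigmaFinite (ν.trim hm)]
    {g f : Ω → ℝ} (hg : StronglyMeasurable[m] g) (hgf : Integrable (g * f) ν)
    (hf : Integrable f ν) (h0 : ν[f|m] =ᵐ[ν] 0) : ∫ ω, (g * f) ω ∂ν = 0 := by
  rw [← integral_condExp hm, integral_congr_ae (condExp_mul_of_stronglyMeasurable_left hg hgf hf)]
  refine integral_eq_zero_of_ae ?_
  filter_upwards [h0] with ω hω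
  simp [hω]

theorem integral_mul_sub_div_mul_eq_zero (hm : m ≤ m₀) [SigmaFinite (ν.trim hm)]
    {f e c r g : Ω → ℝ} (hc : StronglyMeasurable[m] c) (hr : StronglyMeasurable[m] r)
    (hg : StronglyMeasurable[m] g) (he0 : 0 ≤ᵐ[ν] e) (he : Integrable e ν)
    (hf : Integrable f ν) (hcver : c =ᵐ[ν] ν[e|m]) (hcpos : ∀ᵐ ω ∂ν, 0 < c ω)
    (hrver : r =ᵐ[ν] ν[f|m]) (hint : Integrable (g * (f - r / c * e)) ν) :
    ∫ ω, g ω * (f ω - r ω / c ω * e ω) ∂ν = 0 := by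
  have hb : StronglyMeasurable[m] (r / c) := hr.div hc
  have hrb : r =ᵐ[ν] r / c * ν[e|m] := by
    filter_upwards [hcver, hcpos] with ω hω hpos
    rw [Pi.mul_apply, Pi.div_apply, ← hω, div_mul_cancel₀ _ hpos.ne']
  have hbe : Integrable (r / c * e) ν :=
    integrable_mul_of_integrable_mul_condExp hm hb he0 he
      ((integrable_condExp.congr hrver.symm).congr hrb)
  exact integral_mul_eq_zero_of_condExp_ae_eq_zero hm hg hint (hf.sub hbe)
    (condExp_sub_mul_ae_eq_zero hb hf he hbe (hrver.symm.trans hrb))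

end CondExp

section Cond

variable {Ω : Type*} [MeasurableSpace Ω] {μ : Measure Ω} {s : Set Ω} {f : Ω → ℝ}

theorem setIntegral_eq_measureReal_mul_integral_cond [IsFiniteMeasure μ] :
    ∫ ω in s, f ω ∂μ = μ.real s * ∫ ω, f ω ∂μ[|s] := by
  rcases eq_or_ne (μ s) 0 with hs | hs
  · simp [Measure.restrict_eq_zero.2 hs, measureReal_def, hs]
  · rw [ProbabilityTheory.cond, integral_smul_measure, smul_eq_mul, ← mul_assoc, measureReal_def,
      ENNReal.toReal_inv, mul_inv_cancel₀ (ENNReal.toReal_ne_zero.2 ⟨hs, measure_ne_top μ s⟩),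
      one_mul]

theorem IntegrableOn.integrable_cond (hf : IntegrableOn f s μ) : Integrable f μ[|s] := by
  rcases eq_or_ne (μ s) 0 with hs | hs
  · simp [ProbabilityTheory.cond, Measure.restrict_eq_zero.2 hs]
  · exact hf.smul_measure (ENNReal.inv_ne_top.2 hs)

end Cond

theorem augmented_functional_nested_at_truth_general
    {Ω : Type*} [MeasurableSpace Ω] {𝒳 : Type*} [MeasurableSpace 𝒳]
    (μ : Measure Ω) [IsProbabilityMeasure μ]
    (X : Ω → 𝒳) (Y : Ω → ℝ) (S : Ω → Bool)
    (hX : Measurable X) (hS : Measurable S)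
    (η : ℝ) (q : ℝ → ℝ)
    (ℓ : 𝒳 → ℝ → ℝ)
    (c r : 𝒳 → ℝ) (hc : Measurable c) (hr : Measurable r)
    (hexp_int : Integrable (fun ω => Real.exp (η * q (Y ω))) (μ[|{ω | S ω = true}]))
    (hWexp_int : Integrable (fun ω => ℓ (X ω) (Y ω) * Real.exp (η * q (Y ω)))
      (μ[|{ω | S ω = true}]))
    (hcver : (fun ω => c (X ω)) =ᵐ[μ[|{ω | S ω = true}]]
      (μ[|{ω | S ω = true}])[fun ω => Real.exp (η * q (Y ω)) |
        MeasurableSpace.comap X inferInstance])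
    (hcpos : ∀ᵐ ω ∂(μ[|{ω | S ω = true}]), 0 < c (X ω))
    (hrver : (fun ω => r (X ω)) =ᵐ[μ[|{ω | S ω = true}]]
      (μ[|{ω | S ω = true}])[fun ω => ℓ (X ω) (Y ω) * Real.exp (η * q (Y ω)) |
        MeasurableSpace.comap X inferInstance])
    -- the true propensity, with positivity
    (p : 𝒳 → ℝ) (hp : Measurable p)
    (hW_int : Integrable (fun ω => ℓ (X ω) (Y ω)) μ)
    (hintegrand : Integrable (fun ω =>
      if S ω then ℓ (X ω) (Y ω)
        + ((1 - p (X ω)) * Real.exp (η * q (Y ω)) / (p (X ω) * c (X ω)))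
          * (ℓ (X ω) (Y ω) - r (X ω) / c (X ω))
      else r (X ω) / c (X ω)) μ) :
    ((∫ ω, (if S ω then ℓ (X ω) (Y ω)
          + ((1 - p (X ω)) * Real.exp (η * q (Y ω)) / (p (X ω) * c (X ω)))
            * (ℓ (X ω) (Y ω) - r (X ω) / c (X ω))
        else r (X ω) / c (X ω)) ∂μ)
      = (∫ ω, (if S ω then ℓ (X ω) (Y ω) else 0) ∂μ)
        + ∫ ω, (if S ω then 0 else r (X ω) / c (X ω)) ∂μ) ∧
    -- under the exponential tilt hypothesis the common value is ψ(η) = E_μ[W]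
    (((fun ω => r (X ω) / c (X ω)) =ᵐ[μ[|{ω | S ω = false}]]
        (μ[|{ω | S ω = false}])[fun ω => ℓ (X ω) (Y ω) |
          MeasurableSpace.comap X inferInstance]) →
      (∫ ω, (if S ω then ℓ (X ω) (Y ω)
            + ((1 - p (X ω)) * Real.exp (η * q (Y ω)) / (p (X ω) * c (X ω)))
              * (ℓ (X ω) (Y ω) - r (X ω) / c (X ω))
          else r (X ω) / c (X ω)) ∂μ)
        = ∫ ω, ℓ (X ω) (Y ω) ∂μ) := by
  set s : Set Ω := {ω | S ω = true}
  have hs : MeasurableSet s := hS (measurableSet_singleton true)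
  have hsc : {ω | S ω = false} = sᶜ := by ext ω; simp [s]
  have hXm : Measurable[MeasurableSpace.comap X inferInstance] X := comap_measurable X
  set F : Ω → ℝ := fun ω => if S ω then ℓ (X ω) (Y ω)
      + ((1 - p (X ω)) * exp (η * q (Y ω)) / (p (X ω) * c (X ω)))
        * (ℓ (X ω) (Y ω) - r (X ω) / c (X ω))
    else r (X ω) / c (X ω)
  set corr : Ω → ℝ := fun ω => (1 - p (X ω)) / (p (X ω) * c (X ω))
    * (ℓ (X ω) (Y ω) * exp (η * q (Y ω)) - r (X ω) / c (X ω) * exp (η * q (Y ω)))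
  have hF_s : s.EqOn F (fun ω => ℓ (X ω) (Y ω) + corr ω) := by
    intro ω (hω : S ω = true)
    simp only [F, hω, if_true, corr]
    ring
  have hcorr_int : IntegrableOn corr s μ :=
    ((hintegrand.integrableOn.congr_fun hF_s hs).sub hW_int.integrableOn).congr_fun
      (fun ω _ => add_sub_cancel_left _ _) hs
  have hcorr : ∫ ω in s, corr ω ∂μ = 0 := by
    rw [setIntegral_eq_measureReal_mul_integral_cond]
    refine mul_eq_zero_of_right _ (integral_mul_sub_div_mul_eq_zero (c := fun ω => c (X ω))
      (r := fun ω => r (X ω)) (g := fun ω => (1 - p (X ω)) / (p (X ω) * c (X ω)))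
      hX.comap_le (hc.comp hXm).stronglyMeasurable (hr.comp hXm).stronglyMeasurable
      (((measurable_const.sub hp).div (hp.mul hc)).comp hXm).stronglyMeasurable
      (ae_of_all _ fun ω => (exp_pos _).le) hexp_int hWexp_int hcver hcpos hrver
      (IntegrableOn.integrable_cond hcorr_int))
  have hnested : ∫ ω, F ω ∂μ
      = ∫ ω in s, ℓ (X ω) (Y ω) ∂μ + ∫ ω in sᶜ, r (X ω) / c (X ω) ∂μ := by
    rw [← integral_add_compl hs hintegrand, setIntegral_congr_fun hs hF_s,
      integral_add hW_int.integrableOn hcorr_int, hcorr, add_zero]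
    refine congrArg _ (setIntegral_congr_fun hs.compl fun ω (hω : ¬S ω = true) => ?_)
    simp [F, hω]
  refine ⟨?_, fun htilt => ?_⟩
  · rw [hnested, ← integral_indicator hs, ← integral_indicator hs.compl]
    congr 1 <;> refine integral_congr_ae (ae_of_all _ fun ω => ?_) <;>
      cases hω : S ω <;> simp [s, hω]
  · have hb : ∫ ω in sᶜ, r (X ω) / c (X ω) ∂μ = ∫ ω in sᶜ, ℓ (X ω) (Y ω) ∂μ := by
      rw [setIntegral_eq_measureReal_mul_integral_cond,
        setIntegral_eq_measureReal_mul_integral_cond, ← hsc, integral_congr_ae htilt,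
        integral_condExp hX.comap_le]
    rw [hnested, hb, integral_add_compl hs hW_int]

/-- The population augmented functional for the nested design, evaluated at the true
nuisance functions `p`, `c`, `b = r/c`, equals the identified nested risk
`E_μ[1_{S=1} W] + E_μ[1_{S=0} b(X)]`; and if in addition the exponential tilt hypothesis
holds (`b∘X` a version of `E_{μ₀}[W | σ(X)]`), this common value equals
`ψ(η) = E_μ[W]`. -/
theorem augmented_functional_nested_at_truth
    {Ω : Type*} [MeasurableSpace Ω] {𝒳 : Type*} [MeasurableSpace 𝒳]
    (μ : Measure Ω) [IsProbabilityMeasure μ]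
    (X : Ω → 𝒳) (Y : Ω → ℝ) (S : Ω → Bool)
    (hX : Measurable X) (hY : Measurable Y) (hS : Measurable S)
    (hS1 : 0 < μ {ω | S ω = true}) (hS0 : 0 < μ {ω | S ω = false})
    (η : ℝ) (q : ℝ → ℝ) (hq : Measurable q)
    (ℓ : 𝒳 → ℝ → ℝ) (hℓ : Measurable (Function.uncurry ℓ))
    (c r : 𝒳 → ℝ) (hc : Measurable c) (hr : Measurable r)
    (hexp_int : Integrable (fun ω => Real.exp (η * q (Y ω))) (μ[|{ω | S ω = true}]))
    (hWexp_int : Integrable (fun ω => ℓ (X ω) (Y ω) * Real.exp (η * q (Y ω)))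
      (μ[|{ω | S ω = true}]))
    (hcver : (fun ω => c (X ω)) =ᵐ[μ[|{ω | S ω = true}]]
      (μ[|{ω | S ω = true}])[fun ω => Real.exp (η * q (Y ω)) |
        MeasurableSpace.comap X inferInstance])
    (hcpos : ∀ᵐ ω ∂(μ[|{ω | S ω = true}]), 0 < c (X ω))
    (hrver : (fun ω => r (X ω)) =ᵐ[μ[|{ω | S ω = true}]]
      (μ[|{ω | S ω = true}])[fun ω => ℓ (X ω) (Y ω) * Real.exp (η * q (Y ω)) |
        MeasurableSpace.comap X inferInstance])
    -- the true propensity, with positivity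
    (p : 𝒳 → ℝ) (hp : Measurable p)
    (hpver : (fun ω => p (X ω)) =ᵐ[μ]
      μ[fun ω => if S ω then (1 : ℝ) else 0 | MeasurableSpace.comap X inferInstance])
    (hppos : ∀ᵐ ω ∂μ, 0 < p (X ω))
    (hW_int : Integrable (fun ω => ℓ (X ω) (Y ω)) μ)
    (hW_int₀ : Integrable (fun ω => ℓ (X ω) (Y ω)) (μ[|{ω | S ω = false}]))
    (hind_int : Integrable (fun ω => if S ω then ℓ (X ω) (Y ω) else 0) μ)
    (hb_int : Integrable (fun ω => if S ω then 0 else r (X ω) / c (X ω)) μ)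
    (hintegrand : Integrable (fun ω =>
      if S ω then ℓ (X ω) (Y ω)
        + ((1 - p (X ω)) * Real.exp (η * q (Y ω)) / (p (X ω) * c (X ω)))
          * (ℓ (X ω) (Y ω) - r (X ω) / c (X ω))
      else r (X ω) / c (X ω)) μ) :
    ((∫ ω, (if S ω then ℓ (X ω) (Y ω)
          + ((1 - p (X ω)) * Real.exp (η * q (Y ω)) / (p (X ω) * c (X ω)))
            * (ℓ (X ω) (Y ω) - r (X ω) / c (X ω))
        else r (X ω) / c (X ω)) ∂μ)
      = (∫ ω, (if S ω then ℓ (X ω) (Y ω) else 0) ∂μ)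
        + ∫ ω, (if S ω then 0 else r (X ω) / c (X ω)) ∂μ) ∧
    -- under the exponential tilt hypothesis the common value is ψ(η) = E_μ[W]
    (((fun ω => r (X ω) / c (X ω)) =ᵐ[μ[|{ω | S ω = false}]]
        (μ[|{ω | S ω = false}])[fun ω => ℓ (X ω) (Y ω) |
          MeasurableSpace.comap X inferInstance]) →
      (∫ ω, (if S ω then ℓ (X ω) (Y ω)
            + ((1 - p (X ω)) * Real.exp (η * q (Y ω)) / (p (X ω) * c (X ω)))
              * (ℓ (X ω) (Y ω) - r (X ω) / c (X ω))
          else r (X ω) / c (X ω)) ∂μ)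
        = ∫ ω, ℓ (X ω) (Y ω) ∂μ) :=
  augmented_functional_nested_at_truth_general μ X Y S hX hS η q ℓ c r hc hr hexp_int hWexp_int
    hcver hcpos hrver p hp hW_int hintegrand
end

section
/- Assume positivity: 0 < p(X) < 1 μ-a.s. where p∘X is a version of E_μ[1_{S=1} | σ(X)], and let a(x) = ln((1 − p(x))/p(x)) − ln c(x) be the true selection-model offset. Then for every measurable b* : 𝒳 → ℝ (whether or not it equals the true tilted conditional loss b) making the displayed integrands μ-integrable, the nested-design augmented functional in the alternative parameterization is doubly robust at the true offset: E_μ[ 1_{S=1} · W + 1_{S=0} · b*(X) + 1_{S=1} · e^{a(X) + η q(Y)} · (W − b*(X)) ] = E_μ[1_{S=1} W] + E_μ[1_{S=0} b(X)], the identified nested risk ψ(η). -/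
open MeasureTheory ProbabilityTheory Real
open scoped ENNReal

/-!
Conditioning on `X` inside the selected population `{S = 1}` turns the augmentation term into
`E[1_{S=1} e^{a(X)} (r(X) - b*(X) c(X))]`. At the true offset `e^{a} = (1 - p) / (p c)`, and
`E[1_{S=1} | X] = p(X)`, `E[1_{S=0} | X] = 1 - p(X)`, so this equals
`E[1_{S=0} (r(X) / c(X) - b*(X))]`: the `b*` terms cancel against `E[1_{S=0} b*(X)]`, whatever
`b*` is. Only the whole augmentation term is integrable, so the conditioning step truncates on
the sets where the `X`-measurable factors are bounded.
-/

/-- The paper's selection-model offset `a(x)`, evaluated at `p = p(x)` and `c = c(x)`. -/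
noncomputable def selectionOffset (p c : ℝ) : ℝ := log ((1 - p) / p) - log c

theorem exp_selectionOffset_mul_sub {p c r b : ℝ} (hp₀ : 0 < p) (hp₁ : p < 1) (hc : 0 < c) :
    exp (selectionOffset p c) * (r - b * c) = (1 - p) / p * (r / c - b) := by
  rw [selectionOffset, exp_sub, exp_log (div_pos (sub_pos.2 hp₁) hp₀), exp_log hc]
  field_simp

section BoolIndicator

variable {Ω M : Type*} (S : Ω → Bool)

theorem Set.indicator_setOf_eq_ite [Zero M] (f : Ω → M) :
    {ω | S ω = true}.indicator f = fun ω => if S ω then f ω else 0 := by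
  ext ω; by_cases h : S ω <;> simp [h]

theorem Set.indicator_compl_setOf_eq_ite [Zero M] (f : Ω → M) :
    {ω | S ω = true}ᶜ.indicator f = fun ω => if S ω then 0 else f ω := by
  ext ω; by_cases h : S ω <;> simp [h]

theorem Set.indicator_add_indicator_compl_setOf_eq_ite [AddZeroClass M] (f g h : Ω → M) :
    {ω | S ω = true}.indicator f + ({ω | S ω = true}.indicator g + {ω | S ω = true}ᶜ.indicator h)
      = fun ω => if S ω then f ω + g ω else h ω := by
  ext ω; by_cases hω : S ω <;> simp [hω]

end BoolIndicator

namespace ProbabilityTheory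

variable {Ω : Type*} [MeasurableSpace Ω] {μ : Measure Ω} {s : Set Ω}

theorem integral_indicator_eq_toReal_mul_integral_cond (hs : MeasurableSet s) (hμs : μ s ≠ ∞)
    (h : Ω → ℝ) : ∫ ω, s.indicator h ω ∂μ = (μ s).toReal * ∫ ω, h ω ∂μ[|s] := by
  rw [integral_indicator hs, cond, integral_smul_measure, smul_eq_mul, ← mul_assoc,
    ← ENNReal.toReal_mul]
  rcases eq_or_ne (μ s) 0 with h0 | h0
  · simp [Measure.restrict_eq_zero.2 h0]
  rw [ENNReal.mul_inv_cancel h0 hμs, ENNReal.toReal_one, one_mul]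

theorem integrable_indicator_iff_integrable_cond (hs : MeasurableSet s) (hμs : μ s ≠ ∞)
    {h : Ω → ℝ} : Integrable (s.indicator h) μ ↔ Integrable h μ[|s] := by
  rw [integrable_indicator_iff hs]
  rcases eq_or_ne (μ s) 0 with h0 | h0
  · simp [IntegrableOn, Measure.restrict_eq_zero.2 h0, cond_eq_zero_of_meas_eq_zero h0]
  exact (integrable_smul_measure (ENNReal.inv_ne_zero.2 hμs) (ENNReal.inv_ne_top.2 h0)).symm

end ProbabilityTheory

namespace MeasureTheory

variable {Ω : Type*} {m m₀ : MeasurableSpace Ω} {μ : Measure Ω} {s : Set Ω}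

theorem condExp_mul_sub_mul_of_stronglyMeasurable {g h u f : Ω → ℝ}
    (hg : StronglyMeasurable[m] g) (hh : StronglyMeasurable[m] h)
    (hu : Integrable u μ) (hf : Integrable f μ)
    (hZ : Integrable (fun ω => g ω * (u ω - h ω * f ω)) μ) :
    μ[fun ω => g ω * (u ω - h ω * f ω) | m]
      =ᵐ[μ] fun ω => g ω * (μ[u | m] ω - h ω * μ[f | m] ω) := by
  by_cases hm : m ≤ m₀
  swap
  · simp only [condExp_of_not_le hm, Pi.zero_apply, mul_zero, sub_self]; rfl
  -- On `A n = {|g| ≤ n, |g h| ≤ n}` both factors are bounded, so the usual pull-out applies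
  -- there; the `A n` exhaust `Ω`.
  set A : ℕ → Set Ω := fun n => g ⁻¹' Set.Icc (-n) n ∩ (g * h) ⁻¹' Set.Icc (-n) n
  have hA : ∀ n, MeasurableSet[m] (A n) := fun n =>
    (hg.measurable measurableSet_Icc).inter ((hg.mul hh).measurable measurableSet_Icc)
  have hpull : ∀ n {φ : Ω → ℝ}, StronglyMeasurable[m] φ → (∀ ω ∈ A n, |φ ω| ≤ n) →
      ∀ {v : Ω → ℝ}, Integrable v μ →
        Integrable ((A n).indicator φ * v) μ ∧
        μ[(A n).indicator φ * v | m] =ᵐ[μ] (A n).indicator φ * μ[v | m] := by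
    intro n φ hφ hφA v hv
    have hint : Integrable ((A n).indicator φ * v) μ := by
      refine hv.bdd_mul (c := n) ((hφ.indicator (hA n)).mono hm).aestronglyMeasurable
        (.of_forall fun ω => ?_)
      by_cases hω : ω ∈ A n
      · simpa [hω] using hφA ω hω
      · simp [hω]
    exact ⟨hint, condExp_mul_of_stronglyMeasurable_left (hφ.indicator (hA n)) hint hv⟩
  have hloc : ∀ n, (A n).indicator (μ[fun ω => g ω * (u ω - h ω * f ω) | m])
      =ᵐ[μ] (A n).indicator fun ω => g ω * (μ[u | m] ω - h ω * μ[f | m] ω) := by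
    intro n
    have hsplit : (A n).indicator (fun ω => g ω * (u ω - h ω * f ω))
        = (A n).indicator g * u - (A n).indicator (g * h) * f := by
      ext ω; by_cases hω : ω ∈ A n <;> simp [hω]; ring
    obtain ⟨hgu, hgu'⟩ := hpull n hg (fun ω hω => abs_le.2 hω.1) hu
    obtain ⟨hghf, hghf'⟩ := hpull n (hg.mul hh) (fun ω hω => abs_le.2 hω.2) hf
    calc (A n).indicator (μ[fun ω => g ω * (u ω - h ω * f ω) | m])
        =ᵐ[μ] μ[(A n).indicator g * u - (A n).indicator (g * h) * f | m] := by
          rw [← hsplit]; exact (condExp_indicator hZ (hA n)).symm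
      _ =ᵐ[μ] (A n).indicator g * μ[u | m] - (A n).indicator (g * h) * μ[f | m] :=
          (condExp_sub hgu hghf m).trans (hgu'.sub hghf')
      _ = _ := by ext ω; by_cases hω : ω ∈ A n <;> simp [hω]; ring
  filter_upwards [ae_all_iff.2 hloc] with ω hω
  obtain ⟨n, hn⟩ := exists_nat_ge (max |g ω| |g ω * h ω|)
  have hωA : ω ∈ A n := ⟨abs_le.1 ((le_max_left _ _).trans hn),
    abs_le.1 ((le_max_right _ _).trans hn)⟩
  simpa [hωA] using hω n

theorem integral_indicator_eq_integral_mul_condExp_indicator (hm : m ≤ m₀)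
    [IsFiniteMeasure μ] (hs : MeasurableSet[m₀] s) {φ : Ω → ℝ} (hφ : StronglyMeasurable[m] φ)
    (hint : Integrable (s.indicator φ) μ) :
    ∫ ω, s.indicator φ ω ∂μ = ∫ ω, φ ω * μ[s.indicator (1 : Ω → ℝ) | m] ω ∂μ := by
  have hφs : s.indicator φ = φ * s.indicator 1 := by
    ext ω; by_cases hω : ω ∈ s <;> simp [hω]
  rw [← integral_condExp hm, hφs]
  exact integral_congr_ae <| condExp_mul_of_stronglyMeasurable_left hφ (hφs ▸ hint)
    ((integrable_const 1).indicator hs)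

theorem condExp_indicator_compl_one (hm : m ≤ m₀) [IsFiniteMeasure μ] (hs : MeasurableSet[m₀] s) :
    μ[sᶜ.indicator (1 : Ω → ℝ) | m] =ᵐ[μ] 1 - μ[s.indicator 1 | m] := by
  have : sᶜ.indicator (1 : Ω → ℝ) = 1 - s.indicator 1 := by
    ext ω; by_cases hω : ω ∈ s <;> simp [hω]
  have h1 : Integrable (1 : Ω → ℝ) μ := integrable_const 1
  have hc1 : μ[(1 : Ω → ℝ) | m] = 1 := condExp_const hm 1
  rw [this]
  filter_upwards [condExp_sub h1 (h1.indicator hs) m] with ω hω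
  rw [hω, Pi.sub_apply, Pi.sub_apply, hc1]

theorem integral_indicator_odds_mul_eq_integral_indicator_compl (hm : m ≤ m₀)
    [IsFiniteMeasure μ] (hs : MeasurableSet[m₀] s) {p ψ : Ω → ℝ}
    (hp : StronglyMeasurable[m] p) (hψ : StronglyMeasurable[m] ψ)
    (hpver : p =ᵐ[μ] μ[s.indicator (1 : Ω → ℝ) | m]) (hp₀ : ∀ᵐ ω ∂μ, p ω ≠ 0)
    (hint : Integrable (s.indicator fun ω => (1 - p ω) / p ω * ψ ω) μ)
    (hintc : Integrable (sᶜ.indicator ψ) μ) :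
    ∫ ω, s.indicator (fun ω => (1 - p ω) / p ω * ψ ω) ω ∂μ = ∫ ω, sᶜ.indicator ψ ω ∂μ := by
  have hodds : StronglyMeasurable[m] fun ω => (1 - p ω) / p ω * ψ ω :=
    ((stronglyMeasurable_const.sub hp).div hp).mul hψ
  rw [integral_indicator_eq_integral_mul_condExp_indicator hm hs hodds hint,
    integral_indicator_eq_integral_mul_condExp_indicator hm hs.compl hψ hintc]
  refine integral_congr_ae ?_
  filter_upwards [hpver, hp₀, condExp_indicator_compl_one hm hs] with ω hpω hp₀ω hcω
  rw [hcω, Pi.sub_apply, Pi.one_apply, ← hpω]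
  field_simp

end MeasureTheory

namespace ProbabilityTheory

variable {Ω : Type*} {m m₀ : MeasurableSpace Ω} {μ : Measure Ω} [IsFiniteMeasure μ] {s : Set Ω}

theorem integral_indicator_exp_selectionOffset_mul_eq (hm : m ≤ m₀)
    (hs : MeasurableSet[m₀] s) {p c r b u e : Ω → ℝ}
    (hp : StronglyMeasurable[m] p) (hc : StronglyMeasurable[m] c)
    (hr : StronglyMeasurable[m] r) (hb : StronglyMeasurable[m] b)
    (hpver : p =ᵐ[μ] μ[s.indicator (1 : Ω → ℝ) | m]) (hppos : ∀ᵐ ω ∂μ, 0 < p ω ∧ p ω < 1)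
    (hu : Integrable u μ[|s]) (he : Integrable e μ[|s])
    (hrver : r =ᵐ[μ[|s]] μ[|s][u | m]) (hcver : c =ᵐ[μ[|s]] μ[|s][e | m])
    (hcpos : ∀ᵐ ω ∂μ[|s], 0 < c ω)
    (hint : Integrable
      (s.indicator fun ω => exp (selectionOffset (p ω) (c ω)) * (u ω - b ω * e ω)) μ)
    (hr_int : Integrable (sᶜ.indicator fun ω => r ω / c ω) μ)
    (hb_int : Integrable (sᶜ.indicator b) μ) :
    ∫ ω, s.indicator (fun ω => exp (selectionOffset (p ω) (c ω)) * (u ω - b ω * e ω)) ω ∂μ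
      = ∫ ω, sᶜ.indicator (fun ω => r ω / c ω) ω ∂μ - ∫ ω, sᶜ.indicator b ω ∂μ := by
  have hμs : μ s ≠ ∞ := measure_ne_top μ s
  have hψ : sᶜ.indicator (fun ω => r ω / c ω - b ω)
      = sᶜ.indicator (fun ω => r ω / c ω) - sᶜ.indicator b :=
    Set.indicator_sub _ _ _
  have hoffset : StronglyMeasurable[m] fun ω => exp (selectionOffset (p ω) (c ω)) :=
    (((measurable_const.sub hp.measurable).div hp.measurable).log.sub
      hc.measurable.log).exp.stronglyMeasurable
  have hcondExp : μ[|s][fun ω => exp (selectionOffset (p ω) (c ω)) * (u ω - b ω * e ω) | m]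
      =ᵐ[μ[|s]] fun ω => (1 - p ω) / p ω * (r ω / c ω - b ω) := by
    filter_upwards [condExp_mul_sub_mul_of_stronglyMeasurable hoffset hb hu he
        ((integrable_indicator_iff_integrable_cond hs hμs).1 hint),
      hrver, hcver, hcpos, cond_absolutelyContinuous.ae_le hppos] with ω hω hrω hcω hcω₀ hpω
    rw [hω, ← hrω, ← hcω]
    exact exp_selectionOffset_mul_sub hpω.1 hpω.2 hcω₀
  rw [integral_indicator_eq_toReal_mul_integral_cond hs hμs, ← integral_condExp hm,
    integral_congr_ae hcondExp, ← integral_indicator_eq_toReal_mul_integral_cond hs hμs,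
    ← integral_sub' hr_int hb_int, ← hψ]
  exact integral_indicator_odds_mul_eq_integral_indicator_compl hm hs hp ((hr.div hc).sub hb)
    hpver (hppos.mono fun ω h => h.1.ne')
    ((integrable_indicator_iff_integrable_cond hs hμs).2 (integrable_condExp.congr hcondExp))
    (hψ ▸ hr_int.sub hb_int)

end ProbabilityTheory

theorem nested_augmented_functional_doubly_robust_selection_general
    {Ω : Type*} [MeasurableSpace Ω] {𝒳 : Type*} [MeasurableSpace 𝒳]
    (μ : Measure Ω) [IsProbabilityMeasure μ]
    (X : Ω → 𝒳) (Y : Ω → ℝ) (S : Ω → Bool)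
    (hX : Measurable X) (hS : Measurable S)
    (η : ℝ) (q : ℝ → ℝ)
    (ℓ : 𝒳 → ℝ → ℝ)
    (c r : 𝒳 → ℝ) (hc : Measurable c) (hr : Measurable r)
    (hexp_int : Integrable (fun ω => Real.exp (η * q (Y ω))) (μ[|{ω | S ω = true}]))
    (hWexp_int : Integrable (fun ω => ℓ (X ω) (Y ω) * Real.exp (η * q (Y ω)))
      (μ[|{ω | S ω = true}]))
    (hcver : (fun ω => c (X ω)) =ᵐ[μ[|{ω | S ω = true}]]
      (μ[|{ω | S ω = true}])[fun ω => Real.exp (η * q (Y ω)) |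
        MeasurableSpace.comap X inferInstance])
    (hcpos : ∀ᵐ ω ∂(μ[|{ω | S ω = true}]), 0 < c (X ω))
    (hrver : (fun ω => r (X ω)) =ᵐ[μ[|{ω | S ω = true}]]
      (μ[|{ω | S ω = true}])[fun ω => ℓ (X ω) (Y ω) * Real.exp (η * q (Y ω)) |
        MeasurableSpace.comap X inferInstance])
    -- the true propensity, with positivity 0 < p(X) < 1 μ-a.s.
    (p : 𝒳 → ℝ) (hp : Measurable p)
    (hpver : (fun ω => p (X ω)) =ᵐ[μ]
      μ[fun ω => if S ω then (1 : ℝ) else 0 | MeasurableSpace.comap X inferInstance])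
    (hppos : ∀ᵐ ω ∂μ, 0 < p (X ω) ∧ p (X ω) < 1)
    -- the true selection-model offset
    (a : 𝒳 → ℝ)
    (ha : ∀ x, a x = Real.log ((1 - p x) / p x) - Real.log (c x))
    -- an arbitrary measurable b* (possibly ≠ the true tilted conditional loss b = r/c)
    (bstar : 𝒳 → ℝ) (hbstar : Measurable bstar)
    (hind_int : Integrable (fun ω => if S ω then ℓ (X ω) (Y ω) else 0) μ)
    (hb_int : Integrable (fun ω => if S ω then 0 else r (X ω) / c (X ω)) μ)
    (hbstar_int : Integrable (fun ω => if S ω then 0 else bstar (X ω)) μ)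
    (hwt_int : Integrable (fun ω =>
      if S ω then Real.exp (a (X ω) + η * q (Y ω)) * (ℓ (X ω) (Y ω) - bstar (X ω))
      else 0) μ) :
    ∫ ω, (if S ω then ℓ (X ω) (Y ω)
          + Real.exp (a (X ω) + η * q (Y ω)) * (ℓ (X ω) (Y ω) - bstar (X ω))
        else bstar (X ω)) ∂μ
      = (∫ ω, (if S ω then ℓ (X ω) (Y ω) else 0) ∂μ)
        + ∫ ω, (if S ω then 0 else r (X ω) / c (X ω)) ∂μ := by
  have htilt : ∀ ω, rexp (a (X ω) + η * q (Y ω)) * (ℓ (X ω) (Y ω) - bstar (X ω))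
      = rexp (selectionOffset (p (X ω)) (c (X ω))) * (ℓ (X ω) (Y ω) * rexp (η * q (Y ω))
        - bstar (X ω) * rexp (η * q (Y ω))) := fun ω => by
    rw [show a (X ω) = _ from ha (X ω), exp_add, selectionOffset]; ring
  simp only [htilt] at hwt_int ⊢
  rw [← Set.indicator_add_indicator_compl_setOf_eq_ite]
  rw [← Set.indicator_setOf_eq_ite] at hind_int hwt_int hpver ⊢
  rw [← Set.indicator_compl_setOf_eq_ite] at hb_int hbstar_int ⊢
  have hXm : Measurable[MeasurableSpace.comap X inferInstance] X := comap_measurable X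
  have hcore := integral_indicator_exp_selectionOffset_mul_eq (s := {ω | S ω = true})
    (p := fun ω => p (X ω)) (c := fun ω => c (X ω)) (r := fun ω => r (X ω))
    (b := fun ω => bstar (X ω)) hX.comap_le (hS (measurableSet_singleton true))
    (hp.comp hXm).stronglyMeasurable (hc.comp hXm).stronglyMeasurable
    (hr.comp hXm).stronglyMeasurable (hbstar.comp hXm).stronglyMeasurable
    hpver hppos hWexp_int hexp_int hrver hcver hcpos hwt_int hb_int hbstar_int
  rw [integral_add' hind_int (hwt_int.add hbstar_int), integral_add' hwt_int hbstar_int, hcore]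
  ring

/-- Case 2 of the nested-design double-robustness theorem (Appendix D): at the true
selection-model offset `a(x) = ln((1 − p(x))/p(x)) − ln c(x)`, the nested-design augmented
functional in the alternative parameterization equals the identified nested risk
`ψ(η) = E_μ[1_{S=1} W] + E_μ[1_{S=0} b(X)]` for *every* measurable `b*`, whether or not it
equals the true tilted conditional loss `b = r/c`. -/
theorem nested_augmented_functional_doubly_robust_selection
    {Ω : Type*} [MeasurableSpace Ω] {𝒳 : Type*} [MeasurableSpace 𝒳]
    (μ : Measure Ω) [IsProbabilityMeasure μ]
    (X : Ω → 𝒳) (Y : Ω → ℝ) (S : Ω → Bool)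
    (hX : Measurable X) (hY : Measurable Y) (hS : Measurable S)
    (hS1 : 0 < μ {ω | S ω = true}) (hS0 : 0 < μ {ω | S ω = false})
    (η : ℝ) (q : ℝ → ℝ) (hq : Measurable q)
    (ℓ : 𝒳 → ℝ → ℝ) (hℓ : Measurable (Function.uncurry ℓ))
    (c r : 𝒳 → ℝ) (hc : Measurable c) (hr : Measurable r)
    (hexp_int : Integrable (fun ω => Real.exp (η * q (Y ω))) (μ[|{ω | S ω = true}]))
    (hWexp_int : Integrable (fun ω => ℓ (X ω) (Y ω) * Real.exp (η * q (Y ω)))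
      (μ[|{ω | S ω = true}]))
    (hcver : (fun ω => c (X ω)) =ᵐ[μ[|{ω | S ω = true}]]
      (μ[|{ω | S ω = true}])[fun ω => Real.exp (η * q (Y ω)) |
        MeasurableSpace.comap X inferInstance])
    (hcpos : ∀ᵐ ω ∂(μ[|{ω | S ω = true}]), 0 < c (X ω))
    (hrver : (fun ω => r (X ω)) =ᵐ[μ[|{ω | S ω = true}]]
      (μ[|{ω | S ω = true}])[fun ω => ℓ (X ω) (Y ω) * Real.exp (η * q (Y ω)) |
        MeasurableSpace.comap X inferInstance])
    -- the true propensity, with positivity 0 < p(X) < 1 μ-a.s.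
    (p : 𝒳 → ℝ) (hp : Measurable p)
    (hpver : (fun ω => p (X ω)) =ᵐ[μ]
      μ[fun ω => if S ω then (1 : ℝ) else 0 | MeasurableSpace.comap X inferInstance])
    (hppos : ∀ᵐ ω ∂μ, 0 < p (X ω) ∧ p (X ω) < 1)
    -- the true selection-model offset
    (a : 𝒳 → ℝ)
    (ha : ∀ x, a x = Real.log ((1 - p x) / p x) - Real.log (c x))
    -- an arbitrary measurable b* (possibly ≠ the true tilted conditional loss b = r/c)
    (bstar : 𝒳 → ℝ) (hbstar : Measurable bstar)
    (hind_int : Integrable (fun ω => if S ω then ℓ (X ω) (Y ω) else 0) μ)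
    (hb_int : Integrable (fun ω => if S ω then 0 else r (X ω) / c (X ω)) μ)
    (hbstar_int : Integrable (fun ω => if S ω then 0 else bstar (X ω)) μ)
    (hwt_int : Integrable (fun ω =>
      if S ω then Real.exp (a (X ω) + η * q (Y ω)) * (ℓ (X ω) (Y ω) - bstar (X ω))
      else 0) μ)
    (hintegrand : Integrable (fun ω =>
      if S ω then ℓ (X ω) (Y ω)
        + Real.exp (a (X ω) + η * q (Y ω)) * (ℓ (X ω) (Y ω) - bstar (X ω))
      else bstar (X ω)) μ) :
    ∫ ω, (if S ω then ℓ (X ω) (Y ω)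
          + Real.exp (a (X ω) + η * q (Y ω)) * (ℓ (X ω) (Y ω) - bstar (X ω))
        else bstar (X ω)) ∂μ
      = (∫ ω, (if S ω then ℓ (X ω) (Y ω) else 0) ∂μ)
        + ∫ ω, (if S ω then 0 else r (X ω) / c (X ω)) ∂μ :=
  nested_augmented_functional_doubly_robust_selection_general μ X Y S hX hS η q ℓ c r hc hr hexp_int
    hWexp_int hcver hcpos hrver p hp hpver hppos a ha bstar hbstar hind_int hb_int hbstar_int
    hwt_int
end
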